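/- Under the standing assumptions, 𝒬 (equivalently, 𝒜) is a Hilbert cone in the complex Hilbert space L²(M, μ; X). -/

import Mathlib

open scoped ComplexOrder
open MeasureTheory

/-- A *Hilbert cone* in a complex Hilbert space `X`. -/
def IsHilbertCone {X : Type*} [NormedAddCommGroup X] [InnerProductSpace ℂ X]
    (C : Set X) : Prop :=
  IsClosed C ∧ Convex ℝ C ∧
    (∀ (c : ℝ), 0 ≤ c → ∀ u ∈ C, c • u ∈ C) ∧
    (∀ u ∈ C, ∀ v ∈ C, (0 : ℂ) ≤ (inner ℂ u v : ℂ)) ∧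
    (∀ w : X, ∃ u ∈ C, ∃ v ∈ C, ∃ u' ∈ C, ∃ v' ∈ C,
      w = u - v + Complex.I • (u' - v') ∧
        (inner ℂ u v : ℂ) = 0 ∧ (inner ℂ u' v' : ℂ) = 0)

/-- The conical hull of a set: all finite sums with nonnegative real coefficients. -/
def conicalCombinations {V : Type*} [AddCommMonoid V] [Module ℝ V] (s : Set V) : Set V :=
  {v | ∃ (k : ℕ) (a : Fin k → ℝ) (x : Fin k → V),
    (∀ i, 0 ≤ a i) ∧ (∀ i, x i ∈ s) ∧ v = ∑ i, a i • x i}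

/-!
If `u, v, a, b ∈ C` with `⟪u, v⟫ = ⟪a, b⟫ = 0`, then `re ⟪v - b, u - a⟫ = -re ⟪v, a⟫ - re ⟪b, u⟫ ≤ 0`,
so `‖u - a‖ ≤ ‖(u - v) - (a - b)‖`. Inner products of elements of `C` are real, hence
`‖p + I • q‖² = ‖p‖² + ‖q‖²` for `p, q` in the real span of `C`. Together these make the
decomposition `w = u - v + I • (u' - v')` unique and `1`-Lipschitz in each of its four components.

Composing an `L²` function pointwise with these four maps decomposes it inside the cone of
functions with values a.e. in `C`. That cone lies in the closed conical hull of the functions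
`f • φ`: the map `w ↦ u` is a Lipschitz retraction of `X` onto `C` fixing `0`, it sends a simple
function to a conical combination of functions `1_s • φ`, and simple functions are dense in `L²`.
Nonnegativity of inner products passes from the generators `f • φ` to their closed conical hull.
-/

open scoped InnerProductSpace NNReal

theorem conicalCombinations_eq_hull {V : Type*} [AddCommMonoid V] [Module ℝ V] (s : Set V) :
    conicalCombinations s = PointedCone.hull ℝ s := by
  ext v
  rw [SetLike.mem_coe, Submodule.mem_span_set']
  constructor
  · rintro ⟨k, a, x, ha, hx, rfl⟩
    exact ⟨k, fun i => ⟨a i, ha i⟩, fun i => ⟨x i, hx i⟩, rfl⟩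
  · rintro ⟨k, a, x, rfl⟩
    exact ⟨k, fun i => a i, fun i => x i, fun i => (a i).2, fun i => (x i).2, rfl⟩

section InnerProductSpace

variable {E : Type*} [NormedAddCommGroup E] [InnerProductSpace ℂ E]

theorem norm_le_norm_add_I_smul {p q : E} (hpq : (⟪p, q⟫_ℂ).im = 0) :
    ‖p‖ ≤ ‖p + Complex.I • q‖ ∧ ‖q‖ ≤ ‖p + Complex.I • q‖ := by
  have hre : RCLike.re ⟪p, Complex.I • q⟫_ℂ = 0 := by simp [hpq]
  have hsq : ‖p + Complex.I • q‖ ^ 2 = ‖p‖ ^ 2 + ‖q‖ ^ 2 := by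
    rw [@norm_add_sq ℂ, hre, norm_smul, Complex.norm_I]
    ring
  constructor <;> nlinarith [norm_nonneg p, norm_nonneg q, norm_nonneg (p + Complex.I • q)]

theorem im_inner_eq_zero_of_mem_span {C : Set E} (hC : ∀ u ∈ C, ∀ v ∈ C, (⟪u, v⟫_ℂ).im = 0)
    {p q : E} (hp : p ∈ Submodule.span ℝ C) (hq : q ∈ Submodule.span ℝ C) :
    (⟪p, q⟫_ℂ).im = 0 := by
  induction hp using Submodule.span_induction with
  | mem u hu =>
    induction hq using Submodule.span_induction with
    | mem v hv => exact hC u hu v hv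
    | zero => simp
    | add v w _ _ hv hw => simp [hv, hw]
    | smul c v _ hv => simp [hv]
  | zero => simp
  | add u w _ _ hu hw => simp [hu, hw]
  | smul c u _ hu => simp [hu]

theorem norm_sub_le_of_inner_eq_zero {C : Set E} (hC : ∀ u ∈ C, ∀ v ∈ C, 0 ≤ ⟪u, v⟫_ℂ)
    {u v a b : E} (hu : u ∈ C) (hv : v ∈ C) (ha : a ∈ C) (hb : b ∈ C)
    (huv : ⟪u, v⟫_ℂ = 0) (hab : ⟪a, b⟫_ℂ = 0) :
    ‖u - a‖ ≤ ‖(u - v) - (a - b)‖ := by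
  have hvu : ⟪v, u⟫_ℂ = 0 := by rw [← inner_conj_symm, huv, map_zero]
  have hba : ⟪b, a⟫_ℂ = 0 := by rw [← inner_conj_symm, hab, map_zero]
  have hcross : RCLike.re ⟪v - b, u - a⟫_ℂ ≤ 0 := by
    have hva := (Complex.nonneg_iff.mp (hC v hv a ha)).1
    have hbu := (Complex.nonneg_iff.mp (hC b hb u hu)).1
    simp only [inner_sub_left, inner_sub_right, hvu, hba, map_sub, map_zero,
      RCLike.re_to_complex]
    linarith
  have hsplit : u - a = ((u - v) - (a - b)) + (v - b) := by abel
  have hsq : ‖u - a‖ ^ 2 ≤ ‖(u - v) - (a - b)‖ * ‖u - a‖ :=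
    calc ‖u - a‖ ^ 2 = RCLike.re ⟪u - a, u - a⟫_ℂ := @norm_sq_eq_re_inner ℂ _ _ _ _ _
      _ = RCLike.re ⟪(u - v) - (a - b), u - a⟫_ℂ + RCLike.re ⟪v - b, u - a⟫_ℂ := by
        conv_lhs => rw [hsplit]
        rw [inner_add_left, map_add, ← hsplit]
      _ ≤ ‖(u - v) - (a - b)‖ * ‖u - a‖ := add_le_of_le_of_nonpos (re_inner_le_norm _ _) hcross
  rcases (norm_nonneg (u - a)).eq_or_lt with h0 | hpos
  · exact h0 ▸ norm_nonneg _
  · exact le_of_mul_le_mul_right (by rwa [← sq]) hpos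

def IsConeDecomposition (C : Set E) (w u v u' v' : E) : Prop :=
  u ∈ C ∧ v ∈ C ∧ u' ∈ C ∧ v' ∈ C ∧ w = u - v + Complex.I • (u' - v') ∧
    ⟪u, v⟫_ℂ = 0 ∧ ⟪u', v'⟫_ℂ = 0

namespace IsConeDecomposition

variable {C : Set E} {w u v u' v' z a b a' b' : E}

theorem mono {D : Set E} (h : IsConeDecomposition C w u v u' v') (hCD : C ⊆ D) :
    IsConeDecomposition D w u v u' v' :=
  let ⟨hu, hv, hu', hv', rest⟩ := h
  ⟨hCD hu, hCD hv, hCD hu', hCD hv', rest⟩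

theorem of_mem (hw : w ∈ C) (h0 : 0 ∈ C) : IsConeDecomposition C w w 0 0 0 :=
  ⟨hw, h0, h0, h0, by simp, inner_zero_right _, inner_zero_right _⟩

theorem dist_le (hC : ∀ u ∈ C, ∀ v ∈ C, 0 ≤ ⟪u, v⟫_ℂ)
    (h : IsConeDecomposition C w u v u' v') (h' : IsConeDecomposition C z a b a' b') :
    dist u a ≤ dist w z ∧ dist v b ≤ dist w z ∧ dist u' a' ≤ dist w z ∧ dist v' b' ≤ dist w z := by
  obtain ⟨hu, hv, hu', hv', rfl, huv, hu'v'⟩ := h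
  obtain ⟨ha, hb, ha', hb', rfl, hab, ha'b'⟩ := h'
  have hvu : ⟪v, u⟫_ℂ = 0 := by rw [← inner_conj_symm, huv, map_zero]
  have hba : ⟪b, a⟫_ℂ = 0 := by rw [← inner_conj_symm, hab, map_zero]
  have hv'u' : ⟪v', u'⟫_ℂ = 0 := by rw [← inner_conj_symm, hu'v', map_zero]
  have hb'a' : ⟪b', a'⟫_ℂ = 0 := by rw [← inner_conj_symm, ha'b', map_zero]
  have hspan : ∀ x ∈ C, x ∈ Submodule.span ℝ C := fun x hx => Submodule.subset_span hx
  have hpq := norm_le_norm_add_I_smul (p := (u - v) - (a - b)) (q := (u' - v') - (a' - b')) <|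
    im_inner_eq_zero_of_mem_span (fun x hx y hy => (Complex.nonneg_iff.mp (hC x hx y hy)).2.symm)
      (sub_mem (sub_mem (hspan u hu) (hspan v hv)) (sub_mem (hspan a ha) (hspan b hb)))
      (sub_mem (sub_mem (hspan u' hu') (hspan v' hv')) (sub_mem (hspan a' ha') (hspan b' hb')))
  have hwz : u - v + Complex.I • (u' - v') - (a - b + Complex.I • (a' - b')) =
      (u - v) - (a - b) + Complex.I • ((u' - v') - (a' - b')) := by
    simp only [smul_sub]; abel
  simp only [dist_eq_norm, hwz]
  refine ⟨(norm_sub_le_of_inner_eq_zero hC hu hv ha hb huv hab).trans hpq.1, ?_,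
    (norm_sub_le_of_inner_eq_zero hC hu' hv' ha' hb' hu'v' ha'b').trans hpq.2, ?_⟩
  · refine (norm_sub_le_of_inner_eq_zero hC hv hu hb ha hvu hba).trans (le_of_eq_of_le ?_ hpq.1)
    rw [← norm_neg]; congr 1; abel
  · refine (norm_sub_le_of_inner_eq_zero hC hv' hu' hb' ha' hv'u' hb'a').trans
      (le_of_eq_of_le ?_ hpq.2)
    rw [← norm_neg]; congr 1; abel

theorem eq_of_mem (hC : ∀ u ∈ C, ∀ v ∈ C, 0 ≤ ⟪u, v⟫_ℂ) (h : IsConeDecomposition C w u v u' v')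
    (hw : w ∈ C) (h0 : 0 ∈ C) : u = w ∧ v = 0 ∧ u' = 0 ∧ v' = 0 := by
  simpa only [dist_self, dist_le_zero] using h.dist_le hC (of_mem hw h0)

end IsConeDecomposition

theorem isHilbertCone_of_pointedCone (K : PointedCone ℝ E) (hK : IsClosed (K : Set E))
    (hinner : ∀ u ∈ K, ∀ v ∈ K, 0 ≤ ⟪u, v⟫_ℂ)
    (hdec : ∀ w, ∃ u v u' v', IsConeDecomposition (K : Set E) w u v u' v') :
    IsHilbertCone (K : Set E) := by
  refine ⟨hK, K.convex, fun c hc u hu => K.smul_mem hc hu, hinner, fun w => ?_⟩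
  obtain ⟨u, v, u', v', hu, hv, hu', hv', hw, huv, hu'v'⟩ := hdec w
  exact ⟨u, hu, v, hv, u', hu', v', hv', hw, huv, hu'v'⟩

theorem inner_nonneg_of_mem_hull {s : Set E} (hs : ∀ u ∈ s, ∀ v ∈ s, 0 ≤ ⟪u, v⟫_ℂ) {u v : E}
    (hu : u ∈ PointedCone.hull ℝ s) (hv : v ∈ PointedCone.hull ℝ s) : 0 ≤ ⟪u, v⟫_ℂ := by
  induction hu using Submodule.span_induction with
  | mem u hu =>
    induction hv using Submodule.span_induction with
    | mem v hv => exact hs u hu v hv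
    | zero => simp
    | add v w _ _ hv hw => rw [inner_add_right]; exact add_nonneg hv hw
    | smul c v _ hv => rw [← Nonneg.coe_smul, inner_smul_right_eq_smul]; exact smul_nonneg c.2 hv
  | zero => simp
  | add u w _ _ hu hw => rw [inner_add_left]; exact add_nonneg hu hw
  | smul c u _ hu => rw [← Nonneg.coe_smul, inner_smul_left_eq_smul]; exact smul_nonneg c.2 hu

theorem inner_nonneg_of_mem_closure_hull {s : Set E} (hs : ∀ u ∈ s, ∀ v ∈ s, 0 ≤ ⟪u, v⟫_ℂ)
    {u v : E} (hu : u ∈ closure (PointedCone.hull ℝ s : Set E))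
    (hv : v ∈ closure (PointedCone.hull ℝ s : Set E)) : 0 ≤ ⟪u, v⟫_ℂ :=
  (isClosed_Ici (a := (0 : ℂ))).closure_subset <|
    map_mem_closure₂ (f := fun u v : E => ⟪u, v⟫_ℂ) continuous_inner hu hv
      fun _ ha _ hb => inner_nonneg_of_mem_hull hs ha hb

end InnerProductSpace

namespace IsHilbertCone

variable {X : Type*} [NormedAddCommGroup X] [InnerProductSpace ℂ X] {C : Set X}

theorem inner_nonneg (hC : IsHilbertCone C) : ∀ u ∈ C, ∀ v ∈ C, 0 ≤ ⟪u, v⟫_ℂ := hC.2.2.2.1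

theorem zero_mem (hC : IsHilbertCone C) : (0 : X) ∈ C := by
  obtain ⟨u, hu, -⟩ := hC.2.2.2.2 0
  simpa using hC.2.2.1 0 le_rfl u hu

theorem exists_lipschitz_isConeDecomposition (hC : IsHilbertCone C) :
    ∃ u v u' v' : X → X, (∀ w, IsConeDecomposition C w (u w) (v w) (u' w) (v' w)) ∧
      LipschitzWith 1 u ∧ LipschitzWith 1 v ∧ LipschitzWith 1 u' ∧ LipschitzWith 1 v' := by
  choose u hu v hv u' hu' v' hv' hw huv hu'v' using hC.2.2.2.2
  have hd : ∀ w, IsConeDecomposition C w (u w) (v w) (u' w) (v' w) := fun w =>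
    ⟨hu w, hv w, hu' w, hv' w, hw w, huv w, hu'v' w⟩
  have hdist := fun w z => (hd w).dist_le hC.inner_nonneg (hd z)
  exact ⟨u, v, u', v', hd, .mk_one fun w z => (hdist w z).1, .mk_one fun w z => (hdist w z).2.1,
    .mk_one fun w z => (hdist w z).2.2.1, .mk_one fun w z => (hdist w z).2.2.2⟩

end IsHilbertCone

section L2

variable {M : Type*} [MeasurableSpace M] {μ : Measure M}

def nonnegTensors {X : Type*} [NormedAddCommGroup X] [NormedSpace ℂ X] (μ : Measure M)
    (C : Set X) : Set (Lp X 2 μ) :=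
  {G | ∃ φ ∈ C, ∃ f : Lp ℂ 2 μ, (∀ᵐ x ∂μ, (0 : ℂ) ≤ f x) ∧ (∀ᵐ x ∂μ, G x = f x • φ)}

/-- The cone `𝒜`. -/
def pointwiseCone {X : Type*} [NormedAddCommGroup X] (μ : Measure M) (C : Set X) :
    Set (Lp X 2 μ) :=
  {F | ∀ᵐ x ∂μ, F x ∈ C}

section NormedSpace

variable {X : Type*} [NormedAddCommGroup X] [NormedSpace ℂ X] {C : Set X} {r : X → X} {K : ℝ≥0}

theorem indicatorConstLp_mem_nonnegTensors {s : Set M} (hs : MeasurableSet s) (hμs : μ s ≠ ⊤)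
    {φ : X} (hφ : φ ∈ C) : indicatorConstLp 2 hs hμs φ ∈ nonnegTensors μ C := by
  refine ⟨φ, hφ, indicatorConstLp 2 hs hμs 1, ?_, ?_⟩
  · filter_upwards [indicatorConstLp_coeFn (c := (1 : ℂ))] with x hx
    rw [hx]
    exact Set.indicator_nonneg (fun _ _ => zero_le_one) x
  · filter_upwards [indicatorConstLp_coeFn (c := (1 : ℂ)), indicatorConstLp_coeFn (c := φ)]
      with x h1 h2
    rw [h1, h2]
    by_cases hx : x ∈ s <;> simp [hx]

theorem LipschitzWith.compLp_simpleFunc_mem_hull (hr : LipschitzWith K r) (hr0 : r 0 = 0)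
    (hrC : ∀ w, r w ∈ C) (g : Lp.simpleFunc X 2 μ) :
    hr.compLp hr0 (g : Lp X 2 μ) ∈ PointedCone.hull ℝ (nonnegTensors μ C) := by
  induction g using Lp.simpleFunc.induction two_ne_zero ENNReal.ofNat_ne_top with
  | @indicatorConst c s hs hμs =>
    have hrc : hr.compLp hr0 (Lp.simpleFunc.indicatorConst 2 hs hμs.ne c : Lp X 2 μ) =
        indicatorConstLp 2 hs hμs.ne (r c) := by
      apply Lp.ext
      filter_upwards [hr.coeFn_compLp hr0 (indicatorConstLp 2 hs hμs.ne c),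
        indicatorConstLp_coeFn (c := c), indicatorConstLp_coeFn (c := r c)] with x h1 h2 h3
      rw [Lp.simpleFunc.coe_indicatorConst, h1, Function.comp_apply, h2, h3]
      by_cases hx : x ∈ s <;> simp [hx, hr0]
    rw [hrc]
    exact PointedCone.subset_hull (indicatorConstLp_mem_nonnegTensors hs hμs.ne (hrC c))
  | @add f g hf hg hfg hf' hg' =>
    -- `r` is additive on functions with disjoint supports because `r 0 = 0`
    have hadd : hr.compLp hr0 (hf.toLp f + hg.toLp g) =
        hr.compLp hr0 (hf.toLp f) + hr.compLp hr0 (hg.toLp g) := by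
      apply Lp.ext
      filter_upwards [hr.coeFn_compLp hr0 (hf.toLp f + hg.toLp g), hr.coeFn_compLp hr0 (hf.toLp f),
        hr.coeFn_compLp hr0 (hg.toLp g), Lp.coeFn_add (hf.toLp f) (hg.toLp g),
        Lp.coeFn_add (hr.compLp hr0 (hf.toLp f)) (hr.compLp hr0 (hg.toLp g)),
        hf.coeFn_toLp, hg.coeFn_toLp] with x h1 h2 h3 h4 h5 h6 h7
      simp only [h1, h2, h3, h4, h5, h6, h7, Function.comp_apply, Pi.add_apply]
      by_cases hx : f x = 0
      · simp [hx, hr0]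
      · simp [Function.notMem_support.mp (Set.disjoint_left.mp hfg hx), hr0]
    change hr.compLp hr0 (hf.toLp f + hg.toLp g) ∈ _
    rw [hadd]
    exact add_mem hf' hg'

theorem LipschitzWith.compLp_mem_closure_hull (hr : LipschitzWith K r) (hr0 : r 0 = 0)
    (hrC : ∀ w, r w ∈ C) (F : Lp X 2 μ) :
    hr.compLp hr0 F ∈ closure (PointedCone.hull ℝ (nonnegTensors μ C) : Set (Lp X 2 μ)) :=
  map_mem_closure (hr.continuous_compLp hr0) (Lp.simpleFunc.dense ENNReal.ofNat_ne_top F)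
    fun G hG => hr.compLp_simpleFunc_mem_hull hr0 hrC ⟨G, hG⟩

end NormedSpace

section InnerProductSpace

variable {X : Type*} [NormedAddCommGroup X] [InnerProductSpace ℂ X] {C : Set X}

theorem inner_nonneg_of_mem_nonnegTensors (hC : ∀ u ∈ C, ∀ v ∈ C, 0 ≤ ⟪u, v⟫_ℂ)
    {G H : Lp X 2 μ} (hG : G ∈ nonnegTensors μ C) (hH : H ∈ nonnegTensors μ C) :
    0 ≤ ⟪G, H⟫_ℂ := by
  obtain ⟨φ, hφ, f, hf, hfG⟩ := hG
  obtain ⟨ψ, hψ, g, hg, hgH⟩ := hH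
  rw [L2.inner_def]
  refine integral_nonneg_of_ae ?_
  filter_upwards [hf, hg, hfG, hgH] with x hfx hgx hGx hHx
  rw [hGx, hHx, inner_smul_left, inner_smul_right]
  exact mul_nonneg (star_nonneg_iff.mpr hfx) (mul_nonneg hgx (hC φ hφ ψ hψ))

theorem isConeDecomposition_pointwiseCone_of_ae {W U V U' V' : Lp X 2 μ}
    (h : ∀ᵐ x ∂μ, IsConeDecomposition C (W x) (U x) (V x) (U' x) (V' x)) :
    IsConeDecomposition (pointwiseCone μ C) W U V U' V' := by
  refine ⟨h.mono fun x hx => hx.1, h.mono fun x hx => hx.2.1, h.mono fun x hx => hx.2.2.1,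
    h.mono fun x hx => hx.2.2.2.1, ?_, ?_, ?_⟩
  · apply Lp.ext
    filter_upwards [h, Lp.coeFn_add (U - V) (Complex.I • (U' - V')), Lp.coeFn_sub U V,
      Lp.coeFn_sub U' V', Lp.coeFn_smul Complex.I (U' - V')] with x hx h1 h2 h3 h4
    rw [h1, Pi.add_apply, h2, h4, Pi.smul_apply, h3]
    exact hx.2.2.2.2.1
  · rw [L2.inner_def]
    exact integral_eq_zero_of_ae (h.mono fun x hx => hx.2.2.2.2.2.1)
  · rw [L2.inner_def]
    exact integral_eq_zero_of_ae (h.mono fun x hx => hx.2.2.2.2.2.2)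

namespace IsHilbertCone

theorem pointwiseCone_subset_closure_hull (hC : IsHilbertCone C) :
    pointwiseCone μ C ⊆ closure (PointedCone.hull ℝ (nonnegTensors μ C) : Set (Lp X 2 μ)) := by
  obtain ⟨u, _, _, _, hd, hu, -⟩ := hC.exists_lipschitz_isConeDecomposition
  have hu0 : u 0 = 0 := ((hd 0).eq_of_mem hC.inner_nonneg hC.zero_mem hC.zero_mem).1
  intro F hF
  have hF_eq : hu.compLp hu0 F = F := by
    apply Lp.ext
    filter_upwards [hu.coeFn_compLp hu0 F, hF] with x h1 h2
    rw [h1]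
    exact ((hd (F x)).eq_of_mem hC.inner_nonneg h2 hC.zero_mem).1
  exact hF_eq ▸ hu.compLp_mem_closure_hull hu0 (fun w => (hd w).1) F

theorem exists_isConeDecomposition_pointwiseCone (hC : IsHilbertCone C) (W : Lp X 2 μ) :
    ∃ U V U' V', IsConeDecomposition (pointwiseCone μ C) W U V U' V' := by
  obtain ⟨u, v, u', v', hd, hu, hv, hu', hv'⟩ := hC.exists_lipschitz_isConeDecomposition
  obtain ⟨hu0, hv0, hu'0, hv'0⟩ := (hd 0).eq_of_mem hC.inner_nonneg hC.zero_mem hC.zero_mem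
  refine ⟨hu.compLp hu0 W, hv.compLp hv0 W, hu'.compLp hu'0 W, hv'.compLp hv'0 W,
    isConeDecomposition_pointwiseCone_of_ae ?_⟩
  filter_upwards [hu.coeFn_compLp hu0 W, hv.coeFn_compLp hv0 W, hu'.coeFn_compLp hu'0 W,
    hv'.coeFn_compLp hv'0 W] with x h1 h2 h3 h4
  rw [h1, h2, h3, h4]
  exact hd (W x)

end IsHilbertCone

end InnerProductSpace

end L2

theorem coni_isHilbertCone_general
    {M : Type*} [MeasurableSpace M] (μ : Measure M)
    {X : Type*} [NormedAddCommGroup X] [InnerProductSpace ℂ X]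
    (C : Set X) (hC : IsHilbertCone C) :
    IsHilbertCone (closure (conicalCombinations
      {G : Lp X 2 μ | ∃ φ ∈ C, ∃ f : Lp ℂ 2 μ,
        (∀ᵐ x ∂μ, (0 : ℂ) ≤ f x) ∧ (∀ᵐ x ∂μ, G x = f x • φ)})) := by
  change IsHilbertCone (closure (conicalCombinations (nonnegTensors μ C)))
  rw [conicalCombinations_eq_hull, ← PointedCone.coe_closure]
  refine isHilbertCone_of_pointedCone _ isClosed_closure
    (fun U hU V hV => inner_nonneg_of_mem_closure_hull
      (fun G hG H hH => inner_nonneg_of_mem_nonnegTensors hC.inner_nonneg hG hH) hU hV)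
    fun W => ?_
  obtain ⟨U, V, U', V', h⟩ := hC.exists_isConeDecomposition_pointwiseCone W
  exact ⟨U, V, U', V', h.mono hC.pointwiseCone_subset_closure_hull⟩

theorem coni_isHilbertCone
    {M : Type*} [MeasurableSpace M] (μ : Measure M) [SigmaFinite μ]
    [TopologicalSpace.SeparableSpace (Lp ℂ 2 μ)]
    {X : Type*} [NormedAddCommGroup X] [InnerProductSpace ℂ X] [CompleteSpace X]
    [TopologicalSpace.SeparableSpace X]
    (C : Set X) (hC : IsHilbertCone C) :
    IsHilbertCone (closure (conicalCombinations
      {G : Lp X 2 μ | ∃ φ ∈ C, ∃ f : Lp ℂ 2 μ,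
        (∀ᵐ x ∂μ, (0 : ℂ) ≤ f x) ∧ (∀ᵐ x ∂μ, G x = f x • φ)})) :=
  coni_isHilbertCone_general μ C hC
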